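/- arXiv:1511.04271 — 5 statements merged into one kernel-verified Lean document; each statement's English description precedes it below -/
import Mathlib

section
/- Let C and D be complete lattices and f : C → D a monotone map. Then the map ◇_f is completely join-preserving (i.e. ◇_f(sSup S) = sSup (◇_f '' S) for every subset S of C, in particular ◇_f ⊥ = ⊥), ◇_f(u) ≤ f(u) for every u ∈ C, and ◇_f(j) = f(j) for every completely join-prime element j of C. (Lemma 4.5(1).) -/
/-- An element is completely join-prime. -/
def CJPrime {C : Type*} [CompleteLattice C] (j : C) : Prop :=
  j ≠ ⊥ ∧ ∀ S : Set C, j ≤ sSup S → ∃ s ∈ S, j ≤ s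

/-- An element is completely meet-prime. -/
def CMPrime {C : Type*} [CompleteLattice C] (m : C) : Prop :=
  m ≠ ⊤ ∧ ∀ S : Set C, sInf S ≤ m → ∃ s ∈ S, s ≤ m

/-- ◇_f(u) = ⋁ { f j | j completely join-prime, j ≤ u }. -/
def diam {C D : Type*} [CompleteLattice C] [CompleteLattice D]
    (f : C → D) (u : C) : D :=
  sSup (f '' {j | CJPrime j ∧ j ≤ u})

/-- ■_f(v) = ⋁ { j | j completely join-prime, f j ≤ v }. -/
def bsq {C D : Type*} [CompleteLattice C] [CompleteLattice D]
    (f : C → D) (v : D) : C :=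
  sSup {j | CJPrime j ∧ f j ≤ v}

/-- □_g(u) = ⋀ { g m | m completely meet-prime, u ≤ m }. -/
def boxg {C D : Type*} [CompleteLattice C] [CompleteLattice D]
    (g : C → D) (u : C) : D :=
  sInf (g '' {m | CMPrime m ∧ u ≤ m})

/-- ◆_g(v) = ⋀ { m | m completely meet-prime, v ≤ g m }. -/
def bdiam {C D : Type*} [CompleteLattice C] [CompleteLattice D]
    (g : C → D) (v : D) : C :=
  sInf {m | CMPrime m ∧ v ≤ g m}

/-- Every element is the sup of the completely join-primes below it. -/
def JoinPerfect (C : Type*) [CompleteLattice C] : Prop :=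
  ∀ u : C, u = sSup {j | CJPrime j ∧ j ≤ u}

/-- Every element is the inf of the completely meet-primes above it. -/
def MeetPerfect (C : Type*) [CompleteLattice C] : Prop :=
  ∀ u : C, u = sInf {m | CMPrime m ∧ u ≤ m}

/-- `(C, e)` is a canonical extension of the bounded distributive lattice `A`. -/
structure IsCanonicalExtension {A C : Type*} [DistribLattice A] [BoundedOrder A]
    [CompleteLattice C] (e : A → C) : Prop where
  injective : Function.Injective e
  map_bot : e ⊥ = ⊥
  map_top : e ⊤ = ⊤
  map_inf : ∀ a b : A, e (a ⊓ b) = e a ⊓ e b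
  map_sup : ∀ a b : A, e (a ⊔ b) = e a ⊔ e b
  dense_joinOfMeets : ∀ u : C, ∃ 𝒮 : Set (Set A),
      u = sSup ((fun S => sInf (e '' S)) '' 𝒮)
  dense_meetOfJoins : ∀ u : C, ∃ 𝒮 : Set (Set A),
      u = sInf ((fun S => sSup (e '' S)) '' 𝒮)
  compact : ∀ S T : Set A, sInf (e '' S) ≤ sSup (e '' T) →
      ∃ F : Finset A, ↑F ⊆ S ∧ ∃ G : Finset A, ↑G ⊆ T ∧ F.inf id ≤ G.sup id

/-- Closed elements of the canonical extension: meets of subsets of `e(A)`. -/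
def ClosedElem {A C : Type*} [CompleteLattice C] (e : A → C) (x : C) : Prop :=
  ∃ S : Set A, x = sInf (e '' S)

/-- Open elements of the canonical extension: joins of subsets of `e(A)`. -/
def OpenElem {A C : Type*} [CompleteLattice C] (e : A → C) (x : C) : Prop :=
  ∃ S : Set A, x = sSup (e '' S)

/-- Nonempty downward-directed family. -/
def DownDir {C : Type*} [Preorder C] (𝒞 : Set C) : Prop :=
  𝒞.Nonempty ∧ ∀ x ∈ 𝒞, ∀ y ∈ 𝒞, ∃ z ∈ 𝒞, z ≤ x ∧ z ≤ y

/-- Nonempty upward-directed family. -/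
def UpDir {C : Type*} [Preorder C] (𝒪 : Set C) : Prop :=
  𝒪.Nonempty ∧ ∀ x ∈ 𝒪, ∀ y ∈ 𝒪, ∃ z ∈ 𝒪, x ≤ z ∧ y ≤ z

/-- `h` preserves down-directed meets of closed elements. -/
def ClosedEsakia {A C D : Type*} [CompleteLattice C] [CompleteLattice D]
    (e : A → C) (h : C → D) : Prop :=
  ∀ 𝒞 : Set C, DownDir 𝒞 → (∀ c ∈ 𝒞, ClosedElem e c) →
    h (sInf 𝒞) = sInf (h '' 𝒞)

/-- `h` preserves up-directed joins of open elements. -/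
def OpenEsakia {A C D : Type*} [CompleteLattice C] [CompleteLattice D]
    (e : A → C) (h : C → D) : Prop :=
  ∀ 𝒪 : Set C, UpDir 𝒪 → (∀ o ∈ 𝒪, OpenElem e o) →
    h (sSup 𝒪) = sSup (h '' 𝒪)

section Diamond

variable {C D : Type*} [CompleteLattice C] [CompleteLattice D] (f : C → D)

theorem le_diam_of_cjPrime {j u : C} (hj : CJPrime j) (hju : j ≤ u) : f j ≤ diam f u :=
  le_sSup ⟨j, ⟨hj, hju⟩, rfl⟩

theorem diam_mono : Monotone (diam f) := fun _ _ huv =>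
  sSup_le_sSup (Set.image_mono fun _ ⟨hj, hju⟩ => ⟨hj, hju.trans huv⟩)

theorem diam_sSup (S : Set C) : diam f (sSup S) = sSup (diam f '' S) := by
  refine le_antisymm (sSup_le ?_) (sSup_le ?_)
  · rintro _ ⟨j, ⟨hj, hjS⟩, rfl⟩
    -- complete join-primality: `j ≤ sSup S` is already witnessed by a single `s ∈ S`
    obtain ⟨s, hs, hjs⟩ := hj.2 S hjS
    exact (le_diam_of_cjPrime f hj hjs).trans (le_sSup ⟨s, hs, rfl⟩)
  · rintro _ ⟨s, hs, rfl⟩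
    exact diam_mono f (le_sSup hs)

theorem diam_bot : diam f (⊥ : C) = ⊥ := by
  simpa using diam_sSup f ∅

variable {f}

theorem diam_le (hf : Monotone f) (u : C) : diam f u ≤ f u :=
  sSup_le fun _ ⟨_, ⟨_, hju⟩, hfj⟩ => hfj ▸ hf hju

theorem diam_eq_of_cjPrime (hf : Monotone f) {j : C} (hj : CJPrime j) : diam f j = f j :=
  (diam_le hf j).antisymm (le_diam_of_cjPrime f hj le_rfl)

end Diamond

/-- Lemma 4.5(1): `◇_f` is completely join-preserving (so in particular
`◇_f ⊥ = ⊥`), `◇_f u ≤ f u` for all `u`, and `◇_f j = f j` on completely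
join-prime elements. -/
theorem stmt0 {C D : Type*} [CompleteLattice C] [CompleteLattice D]
    (f : C → D) (hf : Monotone f) :
    (∀ S : Set C, diam f (sSup S) = sSup (diam f '' S)) ∧
    diam f (⊥ : C) = ⊥ ∧
    (∀ u : C, diam f u ≤ f u) ∧
    (∀ j : C, CJPrime j → diam f j = f j) :=
  ⟨diam_sSup f, diam_bot f, diam_le hf, fun _ => diam_eq_of_cjPrime hf⟩
end

section
/- Let C and D be complete lattices and g : C → D a monotone map. Then the map □_g is completely meet-preserving (i.e. □_g(sInf S) = sInf (□_g '' S) for every subset S of C, in particular □_g ⊤ = ⊤), g(u) ≤ □_g(u) for every u ∈ C, and □_g(m) = g(m) for every completely meet-prime element m of C. (Lemma 4.5(2).) -/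
section Box

variable {C D : Type*} [CompleteLattice C] [CompleteLattice D] (g : C → D)

theorem monotone_boxg : Monotone (boxg g) := fun _ _ huv =>
  sInf_le_sInf <| Set.image_mono fun _ hm => ⟨hm.1, huv.trans hm.2⟩

theorem boxg_le_of_CMPrime {u m : C} (hm : CMPrime m) (hum : u ≤ m) : boxg g u ≤ g m :=
  sInf_le ⟨m, ⟨hm, hum⟩, rfl⟩

/-- A meet-prime `m` above `sInf S` already lies above some `s ∈ S`, so each term `g m` of the
meet defining `boxg g (sInf S)` also occurs in the meet defining `boxg g s`. -/
theorem boxg_sInf (S : Set C) : boxg g (sInf S) = sInf (boxg g '' S) := by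
  refine le_antisymm (le_sInf ?_) (le_sInf ?_)
  · rintro _ ⟨s, hs, rfl⟩
    exact monotone_boxg g (sInf_le hs)
  · rintro _ ⟨m, ⟨hm, hSm⟩, rfl⟩
    obtain ⟨s, hs, hsm⟩ := hm.2 S hSm
    exact (sInf_le (Set.mem_image_of_mem _ hs)).trans (boxg_le_of_CMPrime g hm hsm)

variable {g}

theorem le_boxg (hg : Monotone g) (u : C) : g u ≤ boxg g u :=
  le_sInf <| by
    rintro _ ⟨m, ⟨-, hum⟩, rfl⟩
    exact hg hum

theorem CMPrime.boxg_eq (hg : Monotone g) {m : C} (hm : CMPrime m) : boxg g m = g m :=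
  (boxg_le_of_CMPrime g hm le_rfl).antisymm (le_boxg hg m)

end Box

/-- Lemma 4.5(2): `□_g` is completely meet-preserving (so in particular
`□_g ⊤ = ⊤`), `g u ≤ □_g u` for all `u`, and `□_g m = g m` on completely
meet-prime elements. -/
theorem stmt1 {C D : Type*} [CompleteLattice C] [CompleteLattice D]
    (g : C → D) (hg : Monotone g) :
    (∀ S : Set C, boxg g (sInf S) = sInf (boxg g '' S)) ∧
    boxg g (⊤ : C) = ⊤ ∧
    (∀ u : C, g u ≤ boxg g u) ∧
    (∀ m : C, CMPrime m → boxg g m = g m) :=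
  ⟨boxg_sInf g, by simpa using boxg_sInf g ∅, le_boxg hg, fun _ hm => hm.boxg_eq hg⟩
end

section
/- Let C and D be complete lattices and f, g : C → D monotone maps. If C is join-perfect, then ◇_f and ■_f form a Galois connection: for all u ∈ C and v ∈ D, ◇_f(u) ≤ v if and only if u ≤ ■_f(v). Dually, if C is meet-perfect, then ◆_g and □_g form a Galois connection: for all u ∈ C and v ∈ D, ◆_g(v) ≤ u if and only if v ≤ □_g(u). (Adjunction between ◇_f and ■_f, and between ◆_g and □_g, established in the proof of Proposition 3.6 and used throughout Section 4.) -/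
section

variable {C D : Type*} [CompleteLattice C] [CompleteLattice D] {f : C → D}

theorem diam_le_iff {u : C} {v : D} :
    diam f u ≤ v ↔ ∀ j, CJPrime j → j ≤ u → f j ≤ v := by
  simp only [diam, sSup_le_iff, Set.forall_mem_image, Set.mem_ofPred_eq, and_imp]

theorem CJPrime.le_bsq_iff (hf : Monotone f) {j : C} (hj : CJPrime j) {v : D} :
    j ≤ bsq f v ↔ f j ≤ v := by
  refine ⟨fun hjv => ?_, fun hfj => le_sSup ⟨hj, hfj⟩⟩
  obtain ⟨j', ⟨-, hfj'⟩, hjj'⟩ := hj.2 _ hjv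
  exact (hf hjj').trans hfj'

theorem JoinPerfect.le_iff_forall_cjPrime (hC : JoinPerfect C) {u w : C} :
    u ≤ w ↔ ∀ j, CJPrime j → j ≤ u → j ≤ w := by
  refine ⟨fun huw j _ hju => hju.trans huw, fun h => ?_⟩
  rw [hC u]
  exact sSup_le fun j ⟨hj, hju⟩ => h j hj hju

theorem JoinPerfect.gc_diam_bsq (hC : JoinPerfect C) (hf : Monotone f) :
    GaloisConnection (diam f) (bsq f) := fun u v => by
  rw [diam_le_iff, hC.le_iff_forall_cjPrime]
  exact forall₂_congr fun j hj => imp_congr_right fun _ => (hj.le_bsq_iff hf).symm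

open OrderDual in
-- Reversing the order of `C` and `D` turns `CMPrime`, `MeetPerfect`, `boxg` and `bdiam` definitionally
-- into `CJPrime`, `JoinPerfect`, `diam` and `bsq`.
theorem MeetPerfect.gc_bdiam_boxg {g : C → D} (hC : MeetPerfect C) (hg : Monotone g) :
    GaloisConnection (bdiam g) (boxg g) := fun v u =>
  (JoinPerfect.gc_diam_bsq (C := Cᵒᵈ) (D := Dᵒᵈ) (f := toDual ∘ g ∘ ofDual) hC hg.dual
    (toDual u) (toDual v)).symm

end

/-- Adjunctions: if `C` is join-perfect, `◇_f ⊣ ■_f`; if `C` is meet-perfect,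
`◆_g ⊣ □_g`. -/
theorem stmt3 {C D : Type*} [CompleteLattice C] [CompleteLattice D]
    (f g : C → D) (hf : Monotone f) (hg : Monotone g) :
    (JoinPerfect C → ∀ (u : C) (v : D), diam f u ≤ v ↔ u ≤ bsq f v) ∧
    (MeetPerfect C → ∀ (u : C) (v : D), bdiam g v ≤ u ↔ v ≤ boxg g u) :=
  ⟨fun hC => hC.gc_diam_bsq hf, fun hC u v => hC.gc_bdiam_boxg hg v u⟩
end

section
/- Let (C, e) be a canonical extension of a bounded distributive lattice A with C join-perfect, and let f : C → C be a monotone, closed Esakia map such that f(e a) is closed in C for every a ∈ A and f(e (a ⊔ b)) ≤ f(e a) ⊔ f(e b) for all a, b ∈ A. Then f(e a) = ◇_f(e a) ⊔ f(⊥) for every a ∈ A. (Lemma 3.7, order-theoretic form.) -/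
/-!
Fix a completely join-prime `p ≤ f (e a)` with `p ≰ f ⊥`. Since `f` preserves down-directed meets
of closed elements, Zorn's lemma yields a minimal closed `c ≤ e a` with `p ≤ f c`. Minimality,
additivity of `f` on `A` and primeness of `p` make the filter `{b | c ≤ e b}` prime, and then
compactness shows that `c` is completely join-prime. Hence `p ≤ f c ≤ ◇_f (e a)`, and
join-perfectness of `C` gives `f (e a) ≤ ◇_f (e a) ⊔ f ⊥`.
-/

theorem zorn_ge_nonempty₀ {α : Type*} [Preorder α] (s : Set α)
    (ih : ∀ c ⊆ s, IsChain (· ≤ ·) c → ∀ y ∈ c, ∃ lb ∈ s, ∀ z ∈ c, lb ≤ z) (x : α) (hxs : x ∈ s) :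
    ∃ m, m ≤ x ∧ Minimal (· ∈ s) m :=
  zorn_le_nonempty₀ (α := αᵒᵈ) s (fun c hcs hc y hy => ih c hcs hc.symm y hy) x hxs

theorem CJPrime.le_or_le {C : Type*} [CompleteLattice C] {j x y : C} (hj : CJPrime j)
    (h : j ≤ x ⊔ y) : j ≤ x ∨ j ≤ y := by
  obtain ⟨s, hs, hjs⟩ := hj.2 {x, y} (sSup_pair (a := x) ▸ h)
  rcases hs with rfl | rfl
  exacts [Or.inl hjs, Or.inr hjs]

section ClosedElem

variable {A C D : Type*} [CompleteLattice C] [CompleteLattice D] {e : A → C}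

theorem closedElem_apply (a : A) : ClosedElem e (e a) :=
  ⟨{a}, by simp⟩

theorem ClosedElem.eq_sInf_image_setOf_le {c : C} (hc : ClosedElem e c) :
    c = sInf (e '' {b | c ≤ e b}) := by
  obtain ⟨S, rfl⟩ := hc
  refine le_antisymm (le_sInf ?_) (sInf_le_sInf (Set.image_mono fun b hb => sInf_le ⟨b, hb, rfl⟩))
  rintro _ ⟨b, hb, rfl⟩
  exact hb

theorem closedElem_sInf {𝒞 : Set C} (h : ∀ c ∈ 𝒞, ClosedElem e c) : ClosedElem e (sInf 𝒞) := by
  refine ⟨{b | sInf 𝒞 ≤ e b}, le_antisymm (le_sInf ?_) (le_sInf fun c hc => ?_)⟩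
  · rintro _ ⟨b, hb, rfl⟩
    exact hb
  · refine le_trans ?_ (h c hc).eq_sInf_image_setOf_le.ge
    exact sInf_le_sInf (Set.image_mono fun b hb => (sInf_le hc).trans hb)

theorem exists_le_minimal_closedElem {f : C → D} {p : D} (hfEs : ClosedEsakia e f) {u : C}
    (hu : ClosedElem e u) (hpu : p ≤ f u) :
    ∃ c ≤ u, Minimal (fun c => ClosedElem e c ∧ p ≤ f c) c := by
  refine zorn_ge_nonempty₀ _ (fun 𝒞 h𝒞 hchain y hy => ?_) u ⟨hu, hpu⟩
  have hclosed : ∀ c ∈ 𝒞, ClosedElem e c := fun c hc => (h𝒞 hc).1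
  refine ⟨sInf 𝒞, ⟨closedElem_sInf hclosed, ?_⟩, fun z hz => sInf_le hz⟩
  have hdir : DownDir 𝒞 := ⟨⟨y, hy⟩, fun a ha b hb =>
    (hchain.total ha hb).elim (fun h => ⟨a, ha, le_rfl, h⟩) fun h => ⟨b, hb, h, le_rfl⟩⟩
  rw [hfEs 𝒞 hdir hclosed]
  exact le_sInf fun _ ⟨c, hc, hfc⟩ => hfc ▸ (h𝒞 hc).2

end ClosedElem

namespace IsCanonicalExtension

variable {A C : Type*} [DistribLattice A] [BoundedOrder A] [CompleteLattice C] {e : A → C}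

theorem monotone (hce : IsCanonicalExtension e) : Monotone e := fun a b hab => by
  rw [← inf_eq_left.mpr hab, hce.map_inf]
  exact inf_le_right

theorem top_mem_setOf_le (hce : IsCanonicalExtension e) (c : C) : ⊤ ∈ {b | c ≤ e b} := by
  simp [hce.map_top]

theorem infClosed_setOf_le (hce : IsCanonicalExtension e) (c : C) : InfClosed {b | c ≤ e b} :=
  fun b hb d hd => show c ≤ e (b ⊓ d) by
    rw [hce.map_inf]
    exact le_inf hb hd

theorem exists_le_of_sInf_le_sSup (hce : IsCanonicalExtension e) {S T : Set A} (hS₁ : ⊤ ∈ S)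
    (hS₂ : InfClosed S) (hT₁ : ⊥ ∈ T) (hT₂ : SupClosed T) (h : sInf (e '' S) ≤ sSup (e '' T)) :
    ∃ s ∈ S, ∃ t ∈ T, s ≤ t := by
  obtain ⟨F, hFS, G, hGT, hFG⟩ := hce.compact S T h
  exact ⟨_, F.inf_induction hS₁ (fun _ ha _ hb => hS₂ ha hb) fun b hb => hFS hb,
    _, G.sup_induction hT₁ (fun _ ha _ hb => hT₂ ha hb) fun b hb => hGT hb, hFG⟩

theorem le_sSup_image_setOf_not_le (hce : IsCanonicalExtension e) {c u : C} (h : ¬c ≤ u) :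
    u ≤ sSup (e '' {b | ¬c ≤ e b}) := by
  obtain ⟨𝒮, rfl⟩ := hce.dense_joinOfMeets u
  refine sSup_le ?_
  rintro _ ⟨S, hS, rfl⟩
  have hcS : ¬c ≤ sInf (e '' S) := fun hc => h (hc.trans (le_sSup ⟨S, hS, rfl⟩))
  obtain ⟨_, ⟨b, hb, rfl⟩, hcb⟩ : ∃ x ∈ e '' S, ¬c ≤ x := by simpa [le_sInf_iff] using hcS
  exact (sInf_le (Set.mem_image_of_mem e hb)).trans (le_sSup (Set.mem_image_of_mem e hcb))

theorem cjPrime_of_closedElem (hce : IsCanonicalExtension e) {c : C} (hc : ClosedElem e c)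
    (hc₀ : c ≠ ⊥) (hprime : ∀ b₁ b₂ : A, c ≤ e (b₁ ⊔ b₂) → c ≤ e b₁ ∨ c ≤ e b₂) : CJPrime c := by
  refine ⟨hc₀, fun S hS => ?_⟩
  by_contra! hSc
  have hST : sSup S ≤ sSup (e '' {b | ¬c ≤ e b}) :=
    sSup_le fun s hs => hce.le_sSup_image_setOf_not_le (hSc s hs)
  obtain ⟨s, hs, t, ht, hst⟩ := hce.exists_le_of_sInf_le_sSup (T := {b | ¬c ≤ e b})
    (hce.top_mem_setOf_le c) (hce.infClosed_setOf_le c)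
    (fun h => hc₀ (le_bot_iff.1 (hce.map_bot ▸ h))) (fun b hb d hd h => (hprime b d h).elim hb hd)
    (hc.eq_sInf_image_setOf_le.ge.trans (hS.trans hST))
  exact ht (hs.trans (hce.monotone hst))

theorem inf_eq_sInf_image_setOf_le (hce : IsCanonicalExtension e) {c : C} (hc : ClosedElem e c)
    (x : A) : c ⊓ e x = sInf ((fun b => e (b ⊓ x)) '' {b | c ≤ e b}) := by
  refine le_antisymm (le_sInf ?_) (le_inf ?_ ?_)
  · rintro _ ⟨b, hb, rfl⟩
    simpa only [hce.map_inf] using inf_le_inf_right (e x) hb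
  · refine le_trans (le_sInf ?_) hc.eq_sInf_image_setOf_le.ge
    rintro _ ⟨b, hb, rfl⟩
    exact (sInf_le (Set.mem_image_of_mem _ hb)).trans (hce.monotone inf_le_left)
  · exact (sInf_le (Set.mem_image_of_mem _ (hce.top_mem_setOf_le c))).trans
      (hce.monotone inf_le_right)

theorem downDir_image_setOf_le (hce : IsCanonicalExtension e) (c : C) (x : A) :
    DownDir ((fun b => e (b ⊓ x)) '' {b | c ≤ e b}) := by
  refine ⟨⟨_, Set.mem_image_of_mem _ (hce.top_mem_setOf_le c)⟩, ?_⟩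
  rintro _ ⟨b, hb, rfl⟩ _ ⟨d, hd, rfl⟩
  exact ⟨_, ⟨b ⊓ d, hce.infClosed_setOf_le c hb hd, rfl⟩,
    hce.monotone (inf_le_inf_right x inf_le_left), hce.monotone (inf_le_inf_right x inf_le_right)⟩

end IsCanonicalExtension

section MinimalClosed

variable {A C D : Type*} [DistribLattice A] [BoundedOrder A] [CompleteLattice C]
  [CompleteLattice D] {e : A → C} {f : C → D} {p : D}

theorem le_of_minimal_closedElem (hce : IsCanonicalExtension e) (hfEs : ClosedEsakia e f)
    {c : C} (hmin : Minimal (fun c => ClosedElem e c ∧ p ≤ f c) c) {x : A}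
    (h : ∀ b, c ≤ e b → p ≤ f (e (b ⊓ x))) : c ≤ e x := by
  have hclosed : ∀ y ∈ (fun b => e (b ⊓ x)) '' {b | c ≤ e b}, ClosedElem e y := by
    rintro _ ⟨b, -, rfl⟩
    exact closedElem_apply _
  have hcx : ClosedElem e (c ⊓ e x) ∧ p ≤ f (c ⊓ e x) := by
    rw [hce.inf_eq_sInf_image_setOf_le hmin.prop.1 x]
    refine ⟨closedElem_sInf hclosed, ?_⟩
    rw [hfEs _ (hce.downDir_image_setOf_le c x) hclosed]
    exact le_sInf fun _ ⟨_, ⟨b, hb, hbx⟩, hfb⟩ => hfb ▸ hbx ▸ h b hb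
  exact (hmin.le_of_le hcx inf_le_left).trans inf_le_right

theorem le_or_le_of_minimal_closedElem (hce : IsCanonicalExtension e) (hf : Monotone f)
    (hfEs : ClosedEsakia e f) (hadd : ∀ a b : A, f (e (a ⊔ b)) ≤ f (e a) ⊔ f (e b))
    (hp : CJPrime p) {c : C} (hmin : Minimal (fun c => ClosedElem e c ∧ p ≤ f c) c) (b₁ b₂ : A)
    (hc : c ≤ e (b₁ ⊔ b₂)) : c ≤ e b₁ ∨ c ≤ e b₂ := by
  by_contra! ⟨h₁, h₂⟩
  obtain ⟨d₁, hd₁, hp₁⟩ : ∃ d₁, c ≤ e d₁ ∧ ¬p ≤ f (e (d₁ ⊓ b₁)) := by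
    by_contra! h
    exact h₁ (le_of_minimal_closedElem hce hfEs hmin h)
  obtain ⟨d₂, hd₂, hp₂⟩ : ∃ d₂, c ≤ e d₂ ∧ ¬p ≤ f (e (d₂ ⊓ b₂)) := by
    by_contra! h
    exact h₂ (le_of_minimal_closedElem hce hfEs hmin h)
  have hcd : c ≤ e (d₁ ⊓ d₂ ⊓ b₁ ⊔ d₁ ⊓ d₂ ⊓ b₂) := by
    rw [← inf_sup_left, hce.map_inf, hce.map_inf]
    exact le_inf (le_inf hd₁ hd₂) hc
  rcases hp.le_or_le (hmin.prop.2.trans ((hf hcd).trans (hadd _ _))) with h | h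
  · exact hp₁ (h.trans (hf (hce.monotone (inf_le_inf_right _ inf_le_left))))
  · exact hp₂ (h.trans (hf (hce.monotone (inf_le_inf_right _ inf_le_right))))

end MinimalClosed

theorem stmt4_general {A C : Type*} [DistribLattice A] [BoundedOrder A] [CompleteLattice C]
    (e : A → C) (hce : IsCanonicalExtension e) (hCj : JoinPerfect C)
    (f : C → C) (hf : Monotone f) (hfEs : ClosedEsakia e f)
    (hadd : ∀ a b : A, f (e (a ⊔ b)) ≤ f (e a) ⊔ f (e b)) :
    ∀ a : A, f (e a) = diam f (e a) ⊔ f ⊥ := by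
  intro a
  refine le_antisymm ((hCj (f (e a))).le.trans (sSup_le ?_)) (sup_le (sSup_le ?_) (hf bot_le))
  · rintro p ⟨hp, hpa⟩
    by_cases hp₀ : p ≤ f ⊥
    · exact le_sup_of_le_right hp₀
    obtain ⟨c, hca, hmin⟩ := exists_le_minimal_closedElem hfEs (closedElem_apply a) hpa
    have hc₀ : c ≠ ⊥ := by
      rintro rfl
      exact hp₀ hmin.prop.2
    have hc : CJPrime c := hce.cjPrime_of_closedElem hmin.prop.1 hc₀
      (le_or_le_of_minimal_closedElem hce hf hfEs hadd hp hmin)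
    exact le_sup_of_le_left (hmin.prop.2.trans (le_sSup ⟨c, ⟨hc, hca⟩, rfl⟩))
  · rintro _ ⟨j, ⟨-, hja⟩, rfl⟩
    exact hf hja

/-- Lemma 3.7 (order-theoretic form): for a monotone closed-Esakia map `f` on
the canonical extension of `A`, with `f(e a)` closed and `f` additive on `A`,
one has `f (e a) = ◇_f (e a) ⊔ f ⊥` for every `a ∈ A`. -/
theorem stmt4 {A C : Type*} [DistribLattice A] [BoundedOrder A] [CompleteLattice C]
    (e : A → C) (hce : IsCanonicalExtension e) (hCj : JoinPerfect C)
    (f : C → C) (hf : Monotone f) (hfEs : ClosedEsakia e f)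
    (hcl : ∀ a : A, ClosedElem e (f (e a)))
    (hadd : ∀ a b : A, f (e (a ⊔ b)) ≤ f (e a) ⊔ f (e b)) :
    ∀ a : A, f (e a) = diam f (e a) ⊔ f ⊥ :=
  stmt4_general e hce hCj f hf hfEs hadd
end

section
/- Under the standing hypotheses on g, it holds that g(u) ⊓ g(v) ≤ g(u ⊓ v) for all u, v ∈ C; that is, multiplicativity of g on the embedded lattice A lifts to multiplicativity on the whole canonical extension C. (Theorem 4.3(2).) -/
/-!
By join-perfectness of `D` it suffices to show `p ≤ g (u ⊓ v)` for every completely join-prime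
`p ≤ g u ⊓ g v`. Multiplicativity makes `F = {a | p ≤ g (e a)}` a filter of `A`, so `x = ⋀ e[F]`
is a down-directed meet of closed elements and the closed Esakia property gives `p ≤ g x`.
Conversely `x ≤ w` whenever `p ≤ g w`: every completely meet-prime `m ≥ w` is open, hence the
up-directed join of the `e a ≤ m`, and the open Esakia property together with join-primeness of
`p` produces such an `a` lying in `F`. Meet-perfectness of `C` then gives `x ≤ w`; taking
`w = u` and `w = v` yields `p ≤ g x ≤ g (u ⊓ v)`.
-/

theorem CMPrime.mem_of_eq_sInf {C : Type*} [CompleteLattice C] {m : C} (hm : CMPrime m)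
    {S : Set C} (h : m = sInf S) : m ∈ S := by
  obtain ⟨s, hs, hsm⟩ := hm.2 S h.ge
  rwa [le_antisymm (h ▸ sInf_le hs) hsm]

theorem IsCanonicalExtension.monotone_s12 {A C : Type*} [DistribLattice A] [BoundedOrder A]
    [CompleteLattice C] {e : A → C} (he : IsCanonicalExtension e) : Monotone e :=
  Monotone.of_map_inf he.map_inf

theorem CMPrime.openElem {A C : Type*} [DistribLattice A] [BoundedOrder A] [CompleteLattice C]
    {e : A → C} (he : IsCanonicalExtension e) {m : C} (hm : CMPrime m) : OpenElem e m := by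
  obtain ⟨𝒮, h𝒮⟩ := he.dense_meetOfJoins m
  obtain ⟨S, -, hS⟩ := hm.mem_of_eq_sInf h𝒮
  exact ⟨S, hS.symm⟩

theorem OpenElem.eq_sSup_image_le {A C : Type*} [CompleteLattice C] {e : A → C} {m : C}
    (hm : OpenElem e m) : m = sSup (e '' {a | e a ≤ m}) := by
  obtain ⟨S, rfl⟩ := hm
  refine le_antisymm (sSup_le_sSup (Set.image_mono fun a ha => ?_)) (sSup_le ?_)
  · exact le_sSup (Set.mem_image_of_mem e ha)
  · rintro _ ⟨a, ha, rfl⟩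
    exact ha

theorem Monotone.downDir_image {A C : Type*} [SemilatticeInf A] [Preorder C] {e : A → C}
    (he : Monotone e) {F : Set A} (hne : F.Nonempty) (hinf : ∀ a ∈ F, ∀ b ∈ F, a ⊓ b ∈ F) :
    DownDir (e '' F) := by
  refine ⟨hne.image e, ?_⟩
  rintro _ ⟨a, ha, rfl⟩ _ ⟨b, hb, rfl⟩
  exact ⟨e (a ⊓ b), Set.mem_image_of_mem e (hinf a ha b hb), he inf_le_left, he inf_le_right⟩

theorem Monotone.upDir_image {A C : Type*} [SemilatticeSup A] [Preorder C] {e : A → C}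
    (he : Monotone e) {T : Set A} (hne : T.Nonempty) (hsup : ∀ a ∈ T, ∀ b ∈ T, a ⊔ b ∈ T) :
    UpDir (e '' T) := by
  refine ⟨hne.image e, ?_⟩
  rintro _ ⟨a, ha, rfl⟩ _ ⟨b, hb, rfl⟩
  exact ⟨e (a ⊔ b), Set.mem_image_of_mem e (hsup a ha b hb), he le_sup_left, he le_sup_right⟩

section Esakia

variable {A C D : Type*} [CompleteLattice C] [CompleteLattice D] {e : A → C} {g : C → D}

theorem ClosedEsakia.map_sInf_image [SemilatticeInf A] (hg : ClosedEsakia e g) (he : Monotone e)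
    {F : Set A} (hne : F.Nonempty) (hinf : ∀ a ∈ F, ∀ b ∈ F, a ⊓ b ∈ F) :
    g (sInf (e '' F)) = sInf (g '' (e '' F)) := by
  refine hg _ (he.downDir_image hne hinf) ?_
  rintro _ ⟨a, -, rfl⟩
  exact ⟨{a}, by simp⟩

theorem OpenEsakia.map_sSup_image [SemilatticeSup A] (hg : OpenEsakia e g) (he : Monotone e)
    {T : Set A} (hne : T.Nonempty) (hsup : ∀ a ∈ T, ∀ b ∈ T, a ⊔ b ∈ T) :
    g (sSup (e '' T)) = sSup (g '' (e '' T)) := by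
  refine hg _ (he.upDir_image hne hsup) ?_
  rintro _ ⟨a, -, rfl⟩
  exact ⟨{a}, by simp⟩

variable [DistribLattice A] [BoundedOrder A]

theorem OpenEsakia.exists_le_of_le_map_openElem (he : IsCanonicalExtension e)
    (hg : OpenEsakia e g) {m : C} (hm : OpenElem e m) {p : D} (hp : CJPrime p)
    (hpm : p ≤ g m) : ∃ a, e a ≤ m ∧ p ≤ g (e a) := by
  set T : Set A := {a | e a ≤ m}
  have hbot : ⊥ ∈ T := by simp [T, he.map_bot]
  have hsup : ∀ a ∈ T, ∀ b ∈ T, a ⊔ b ∈ T :=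
    fun a ha b hb => by simpa only [T, Set.mem_ofPred_eq, he.map_sup] using sup_le ha hb
  rw [hm.eq_sSup_image_le, hg.map_sSup_image he.monotone_s12 ⟨⊥, hbot⟩ hsup] at hpm
  obtain ⟨_, ⟨_, ⟨a, ha, rfl⟩, rfl⟩, hpa⟩ := hp.2 _ hpm
  exact ⟨a, ha, hpa⟩

theorem sInf_image_le_of_le_map (he : IsCanonicalExtension e) (hC : MeetPerfect C)
    (hg : Monotone g) (hgo : OpenEsakia e g) {p : D} (hp : CJPrime p) {w : C}
    (hpw : p ≤ g w) : sInf (e '' {a | p ≤ g (e a)}) ≤ w := by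
  rw [hC w]
  refine le_sInf ?_
  rintro m ⟨hm, hwm⟩
  obtain ⟨a, ham, hpa⟩ :=
    hgo.exists_le_of_le_map_openElem he (hm.openElem he) hp (hpw.trans (hg hwm))
  exact (sInf_le (Set.mem_image_of_mem e hpa)).trans ham

theorem le_map_sInf_image (he : IsCanonicalExtension e) (hg : Monotone g)
    (hgc : ClosedEsakia e g) (hmul : ∀ a b : A, g (e a) ⊓ g (e b) ≤ g (e (a ⊓ b)))
    {p : D} {w : C} (hpw : p ≤ g w) : p ≤ g (sInf (e '' {a | p ≤ g (e a)})) := by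
  set F : Set A := {a | p ≤ g (e a)}
  have htop : ⊤ ∈ F := by
    simpa only [F, Set.mem_ofPred_eq, he.map_top] using hpw.trans (hg le_top)
  have hinf : ∀ a ∈ F, ∀ b ∈ F, a ⊓ b ∈ F := fun a ha b hb => (le_inf ha hb).trans (hmul a b)
  rw [hgc.map_sInf_image he.monotone_s12 ⟨⊤, htop⟩ hinf]
  refine le_sInf ?_
  rintro _ ⟨_, ⟨a, ha, rfl⟩, rfl⟩
  exact ha

end Esakia

theorem stmt12_general {A C D : Type*} [DistribLattice A] [BoundedOrder A]
    [CompleteLattice C] [CompleteLattice D]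
    (eA : A → C)
    (hceA : IsCanonicalExtension eA)
    (hCm : MeetPerfect C)
    (hDj : JoinPerfect D)
    (g : C → D) (hg : Monotone g)
    (hgcE : ClosedEsakia eA g) (hgoE : OpenEsakia eA g)
    (hmul : ∀ a b : A, g (eA a) ⊓ g (eA b) ≤ g (eA (a ⊓ b))) :
    ∀ u v : C, g u ⊓ g v ≤ g (u ⊓ v) := by
  intro u v
  rw [hDj (g u ⊓ g v)]
  refine sSup_le ?_
  rintro p ⟨hp, hpuv⟩
  have hpu : p ≤ g u := hpuv.trans inf_le_left
  have hpv : p ≤ g v := hpuv.trans inf_le_right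
  exact (le_map_sInf_image hceA hg hgcE hmul hpu).trans <| hg <|
    le_inf (sInf_image_le_of_le_map hceA hCm hg hgoE hp hpu)
      (sInf_image_le_of_le_map hceA hCm hg hgoE hp hpv)

/-- Theorem 4.3(2): under the standing hypotheses on `g`, multiplicativity on
the embedded lattice lifts to multiplicativity on all of `C`. -/
theorem stmt12 {A B C D : Type*} [DistribLattice A] [BoundedOrder A]
    [DistribLattice B] [BoundedOrder B] [CompleteLattice C] [CompleteLattice D]
    (eA : A → C) (eB : B → D)
    (hceA : IsCanonicalExtension eA) (hceB : IsCanonicalExtension eB)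
    (hCj : JoinPerfect C) (hCm : MeetPerfect C)
    (hDj : JoinPerfect D) (hDm : MeetPerfect D)
    (g : C → D) (hg : Monotone g)
    (hgcE : ClosedEsakia eA g) (hgoE : OpenEsakia eA g)
    (hop : ∀ a : A, OpenElem eB (g (eA a)))
    (hmul : ∀ a b : A, g (eA a) ⊓ g (eA b) ≤ g (eA (a ⊓ b))) :
    ∀ u v : C, g u ⊓ g v ≤ g (u ⊓ v) :=
  stmt12_general eA hceA hCm hDj g hg hgcE hgoE hmul
end
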